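/- In the two-candidate reduced instance, for every B ⊆ {1, …, m}, setting W = {v_i : i ∈ B}: the number of vertices in H_W voting for candidate 0 equals 3ℓm − ℓ + (m − |B|), and the number of vertices in H_W voting for candidate 1 equals 1 + m·|⋃_{i ∈ {1,…,m} \ B} S_i|. -/

import Mathlib

/-- Vertices of the two-candidate reduced instance: the path vertices
`u_1, …, u_{ℓ(3m−1)}` (0-indexed as `u i` for `i : Fin (ℓ * (3 * m - 1))`, so `u_1` is
`u ⟨0, _⟩`), the vertex `r`, the vertices `v_1, …, v_m`, and the vertices `w_{j,k}` for
`j ∈ [m]`, `k ∈ [3ℓ]` (both 0-indexed). -/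
inductive V2 (ℓ m : ℕ) : Type
  | u (i : Fin (ℓ * (3 * m - 1))) : V2 ℓ m
  | r : V2 ℓ m
  | v (i : Fin m) : V2 ℓ m
  | w (j : Fin m) (k : Fin (3 * ℓ)) : V2 ℓ m
  deriving DecidableEq

/-- Base edge relation of the two-candidate reduced instance: `u_i ~ u_{i+1}`,
`u_{ℓ(3m−1)} ~ r`, `r ~ v_i` for all `i`, and `v_i ~ w_{j,k}` iff `k ∈ S i`. -/
def baseRel2 (ℓ m : ℕ) (S : Fin m → Finset (Fin (3 * ℓ))) :
    V2 ℓ m → V2 ℓ m → Prop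
  | .u i, .u i' => (i : ℕ) + 1 = (i' : ℕ)
  | .u i, .r => (i : ℕ) + 1 = ℓ * (3 * m - 1)
  | .r, .v _ => True
  | .v i, .w _ k => k ∈ S i
  | _, _ => False

/-- The graph of the two-candidate reduced instance. -/
def G2 (ℓ m : ℕ) (S : Fin m → Finset (Fin (3 * ℓ))) : SimpleGraph (V2 ℓ m) :=
  SimpleGraph.fromRel (baseRel2 ℓ m S)

/-- The voting function of the two-candidate reduced instance: `u`'s and `v`'s vote for
candidate `0`; `r` and the `w`'s vote for candidate `1`. -/
def τ2 (ℓ m : ℕ) : V2 ℓ m → Fin 2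
  | .u _ => 0
  | .r => 1
  | .v _ => 0
  | .w _ _ => 1

/-- The distinguished vertex `x = u_1`. -/
def x2 (ℓ m : ℕ) (h : 0 < ℓ * (3 * m - 1)) : V2 ℓ m := V2.u ⟨0, h⟩

/-- `HW G W x`: the set of vertices reachable from `x` in the subgraph of `G` induced on
the complement of `W` (each step of a connecting walk must avoid `W`). -/
def HW {V : Type*} (G : SimpleGraph V) (W : Set V) (x : V) : Set V :=
  {z | Relation.ReflTransGen (fun a b => G.Adj a b ∧ a ∉ W ∧ b ∉ W) x z}

/-- With two candidates, candidate `1` uniquely wins the election restricted to `W` iff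
`|H_W ∩ τ⁻¹(1)| > |H_W ∩ τ⁻¹(0)|`. -/
def wins2 (ℓ m : ℕ) (S : Fin m → Finset (Fin (3 * ℓ))) (x : V2 ℓ m)
    (W : Set (V2 ℓ m)) : Prop :=
  (HW (G2 ℓ m S) W x ∩ τ2 ℓ m ⁻¹' {0}).ncard <
    (HW (G2 ℓ m S) W x ∩ τ2 ℓ m ⁻¹' {1}).ncard

/-!
Deleting `v_i` for `i ∈ B` leaves `u_1 ⋯ u_{ℓ(3m−1)} r` a path, keeps `r` joined to the
remaining `v_i`, and keeps `w_{j,k}` reachable exactly when some remaining `v_i` has `k ∈ S_i`.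
So `H_W` is described by the predicate `V2.Survives`, and the two vote counts are cardinalities
of explicit finite sets.
-/

section Reachability

variable {V : Type*} {G : SimpleGraph V} {W T : Set V} {x a b : V}

theorem self_mem_HW : x ∈ HW G W x := .refl

theorem mem_HW_of_adj (ha : a ∈ HW G W x) (hab : G.Adj a b) (haW : a ∉ W) (hbW : b ∉ W) :
    b ∈ HW G W x :=
  .tail ha ⟨hab, haW, hbW⟩

theorem HW_subset_of_adj_closed (hx : x ∈ T)
    (hT : ∀ a ∈ T, ∀ b, G.Adj a b → b ∉ W → b ∈ T) : HW G W x ⊆ T := by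
  intro z hz
  induction hz with
  | refl => exact hx
  | tail _ hab ih => exact hT _ ih _ hab.1 hab.2.2

end Reachability

namespace V2

variable {ℓ m : ℕ} {S : Fin m → Finset (Fin (3 * ℓ))} {B : Finset (Fin m)}

def Survives (S : Fin m → Finset (Fin (3 * ℓ))) (B : Finset (Fin m)) : V2 ℓ m → Prop
  | .u _ => True
  | .r => True
  | .v i => i ∉ B
  | .w _ k => ∃ i ∉ B, k ∈ S i

theorem G2_adj_iff {a b : V2 ℓ m} :
    (G2 ℓ m S).Adj a b ↔ a ≠ b ∧ (baseRel2 ℓ m S a b ∨ baseRel2 ℓ m S b a) :=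
  SimpleGraph.fromRel_adj _ _ _

theorem survives_of_adj {a b : V2 ℓ m} (ha : a.Survives S B) (hab : (G2 ℓ m S).Adj a b)
    (hb : b ∉ {z | ∃ i ∈ B, z = V2.v i}) : b.Survives S B := by
  rcases G2_adj_iff.1 hab with ⟨-, h | h⟩ <;> cases a <;> cases b <;>
    aesop (add norm simp [baseRel2, Survives])

theorem mem_HW_of_survives (hpos : 0 < ℓ * (3 * m - 1)) {z : V2 ℓ m} (hz : z.Survives S B) :
    z ∈ HW (G2 ℓ m S) {z | ∃ i ∈ B, z = V2.v i} (V2.u ⟨0, hpos⟩) := by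
  set H := HW (G2 ℓ m S) {z | ∃ i ∈ B, z = V2.v i} (V2.u ⟨0, hpos⟩)
  have path : ∀ n (hn : n < ℓ * (3 * m - 1)), V2.u ⟨n, hn⟩ ∈ H := by
    intro n
    induction n with
    | zero => exact fun _ => self_mem_HW
    | succ n ih =>
      exact fun hn => mem_HW_of_adj (ih (by omega)) (G2_adj_iff.2 ⟨by simp, .inl rfl⟩)
        (by simp) (by simp)
  have root : V2.r ∈ H :=
    mem_HW_of_adj (path _ (Nat.sub_one_lt hpos.ne')) (G2_adj_iff.2 ⟨by simp, .inl (by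
      simp only [baseRel2]; omega)⟩) (by simp) (by simp)
  have hub : ∀ i ∉ B, V2.v i ∈ H := fun i hi =>
    mem_HW_of_adj root (G2_adj_iff.2 ⟨by simp, .inl trivial⟩) (by simp) (by simpa using hi)
  cases z with
  | u i => exact path i.1 i.2
  | r => exact root
  | v i => exact hub i hz
  | w j k =>
    obtain ⟨i, hi, hk⟩ := hz
    exact mem_HW_of_adj (hub i hi) (G2_adj_iff.2 ⟨by simp, .inl hk⟩) (by simpa using hi)
      (by simp)

theorem HW_G2_eq (hpos : 0 < ℓ * (3 * m - 1)) :
    HW (G2 ℓ m S) {z | ∃ i ∈ B, z = V2.v i} (V2.u ⟨0, hpos⟩) = {z | z.Survives S B} :=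
  subset_antisymm (HW_subset_of_adj_closed trivial fun _ ha _ => survives_of_adj ha)
    fun _ => mem_HW_of_survives hpos

open Finset in
theorem ncard_survives_inter_vote0 :
    ({z : V2 ℓ m | z.Survives S B} ∩ τ2 ℓ m ⁻¹' {0}).ncard = 3 * ℓ * m - ℓ + (m - #B) := by
  have hset : {z : V2 ℓ m | z.Survives S B} ∩ τ2 ℓ m ⁻¹' {0} =
      (↑(univ.image V2.u ∪ (univ \ B).image V2.v : Finset (V2 ℓ m)) : Set (V2 ℓ m)) := by
    ext z
    cases z <;> simp [Survives, τ2]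
  have hdisj : Disjoint (univ.image (V2.u (ℓ := ℓ) (m := m))) ((univ \ B).image V2.v) := by
    simp [disjoint_left]
  rw [hset, Set.ncard_coe_finset, card_union_of_disjoint hdisj,
    card_image_of_injective _ fun _ _ => V2.u.inj, card_image_of_injective _ fun _ _ => V2.v.inj,
    card_univ_sdiff, card_univ, Fintype.card_fin, Fintype.card_fin, Nat.mul_sub_one]
  ring_nf

open Finset in
theorem ncard_survives_inter_vote1 :
    ({z : V2 ℓ m | z.Survives S B} ∩ τ2 ℓ m ⁻¹' {1}).ncard = 1 + m * #((univ \ B).biUnion S) := by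
  have hset : {z : V2 ℓ m | z.Survives S B} ∩ τ2 ℓ m ⁻¹' {1} =
      (↑(insert V2.r ((univ ×ˢ (univ \ B).biUnion S).image fun p => V2.w p.1 p.2) :
        Finset (V2 ℓ m)) : Set (V2 ℓ m)) := by
    ext z
    cases z <;> simp [Survives, τ2]
  rw [hset, Set.ncard_coe_finset, card_insert_of_notMem (by simp),
    card_image_of_injective _ fun _ _ h => by simpa [Prod.ext_iff] using h, card_product,
    card_univ, Fintype.card_fin]
  ring

end V2

/-- Vote counts for a deletion set `W = {v_i : i ∈ B}`: candidate `0` gets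
`3ℓm − ℓ + (m − |B|)` votes and candidate `1` gets `1 + m·|⋃_{i ∉ B} S_i|` votes. -/
theorem vote_counts_after_deleting_v (ℓ m : ℕ) (hℓ : 1 ≤ ℓ) (hm : 1 ≤ m)
    (S : Fin m → Finset (Fin (3 * ℓ)))
    (B : Finset (Fin m)) :
    (HW (G2 ℓ m S) {z | ∃ i ∈ B, z = V2.v i} (x2 ℓ m (Nat.mul_pos hℓ (by omega))) ∩
        τ2 ℓ m ⁻¹' {0}).ncard = 3 * ℓ * m - ℓ + (m - B.card) ∧
    (HW (G2 ℓ m S) {z | ∃ i ∈ B, z = V2.v i} (x2 ℓ m (Nat.mul_pos hℓ (by omega))) ∩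
        τ2 ℓ m ⁻¹' {1}).ncard = 1 + m * ((Finset.univ \ B).biUnion S).card := by
  rw [x2, V2.HW_G2_eq]
  exact ⟨V2.ncard_survives_inter_vote0, V2.ncard_survives_inter_vote1⟩
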